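/- Hoeffding decomposition of the circular block bootstrap version of a U-statistic (deterministic identity): Let n, l, m ∈ ℕ with l ≥ 2, let x₁,…,x_n ∈ ℝ be extended circularly by x_k = x_{k−n} for k > n, let θ ∈ ℝ, h₁: ℝ → ℝ and h₂: ℝ×ℝ → ℝ be arbitrary functions, and define h(x,y) = θ + h₁(x) + h₁(y) + h₂(x,y). For i = 1,…,n put x̄₁(i) = (2/(l(l−1))) Σ_{i ≤ a < b ≤ i+l−1} h(x_a, x_b). Then for any t₁,…,t_m ∈ {1,…,n}: √(ml)·((1/m) Σ_{j=1}^m x̄₁(t_j) − (1/n) Σ_{i=1}^n x̄₁(i)) = (2/√(ml)) Σ_{j=1}^m [Σ_{k=t_j}^{t_j+l−1} h₁(x_k) − (l/n) Σ_{r=1}^n h₁(x_r)] + (2/(√(ml)(l−1))) Σ_{j=1}^m [Σ_{t_j ≤ a < b ≤ t_j+l−1} h₂(x_a, x_b) − (1/n) Σ_{r=1}^n Σ_{r ≤ a < b ≤ r+l−1} h₂(x_a, x_b)]. -/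

import Mathlib

open Finset

/-! Writing `θ + h₁ a + h₁ b = (θ/2 + h₁ a) + (θ/2 + h₁ b)`, every point of a block of length
`l = d + 1` occurs in exactly `d` of its pairs, so
`x̄₁(i) = θ + (2/l) Σ_{block} h₁ + (2/(l(l-1))) Σ_{pairs in block} h₂`.
By the circular extension each `h₁(x_r)` lies in exactly `l` of the `n` blocks, so the average of
the block sums of `h₁` is `(l/n) Σ_r h₁(x_r)`. The `θ`'s cancel, and `√(ml) · 2/(ml) = 2/√(ml)`. -/

theorem Finset.sum_Icc_add_eq_sum_range {M : Type*} [AddCommMonoid M] (g : ℕ → M) (a d : ℕ) :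
    ∑ k ∈ Icc a (a + d), g k = ∑ j ∈ range (d + 1), g (a + j) := by
  rw [← Ico_add_one_right_eq_Icc, sum_Ico_eq_sum_range]
  congr 2
  omega

theorem Finset.sum_range_eq_sum_Icc_one {M : Type*} [AddCommMonoid M] (g : ℕ → M) (n : ℕ) :
    ∑ i ∈ range n, g (i + 1) = ∑ i ∈ Icc 1 n, g i := by
  rw [range_eq_Ico, sum_Ico_add', zero_add, Ico_add_one_right_eq_Icc]

theorem Function.Periodic.sum_range_comp_add {M : Type*} [AddCommMonoid M] {f : ℕ → M} {n : ℕ}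
    (hf : Function.Periodic f n) (d : ℕ) :
    ∑ i ∈ range n, f (i + d) = ∑ i ∈ range n, f i := by
  induction d with
  | zero => rfl
  | succ d ih =>
    rw [← ih]
    rcases n with _ | n
    · rfl
    · rw [sum_range_succ, sum_range_succ', zero_add, ← hf d]
      congr 1
      · exact sum_congr rfl fun i _ => congrArg f (by omega)
      · exact congrArg f (by omega)

theorem Function.Periodic.sum_range_sum_range_add {M : Type*} [AddCommMonoid M] {f : ℕ → M}
    {n : ℕ} (hf : Function.Periodic f n) (L : ℕ) :
    ∑ i ∈ range n, ∑ j ∈ range L, f (i + j) = L • ∑ i ∈ range n, f i := by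
  rw [sum_comm, sum_congr rfl fun j _ => hf.sum_range_comp_add j, sum_const, card_range]

theorem Function.Periodic.sum_Icc_one_sum_Icc_add {M : Type*} [AddCommMonoid M] {g : ℕ → M}
    {n : ℕ} (hg : Function.Periodic (fun k => g (k + 1)) n) (d : ℕ) :
    ∑ i ∈ Icc 1 n, ∑ k ∈ Icc i (i + d), g k = (d + 1) • ∑ i ∈ Icc 1 n, g i := by
  calc ∑ i ∈ Icc 1 n, ∑ k ∈ Icc i (i + d), g k
      = ∑ i ∈ range n, ∑ j ∈ range (d + 1), g (i + j + 1) := by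
        rw [← sum_range_eq_sum_Icc_one]
        refine sum_congr rfl fun i _ => ?_
        rw [sum_Icc_add_eq_sum_range]
        exact sum_congr rfl fun j _ => by rw [Nat.add_right_comm]
    _ = (d + 1) • ∑ i ∈ Icc 1 n, g i := by
        rw [hg.sum_range_sum_range_add, sum_range_eq_sum_Icc_one]

theorem sum_Icc_sum_Icc_add_add {M : Type*} [AddCommMonoid M] (g : ℕ → M) (i d : ℕ) :
    ∑ a ∈ Icc i (i + d), ∑ b ∈ Icc (a + 1) (i + d), (g a + g b)
      = d • ∑ k ∈ Icc i (i + d), g k := by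
  induction d with
  | zero => simp
  | succ d ih =>
    have hsplit : ∀ a ∈ Icc i (i + d), ∑ b ∈ Icc (a + 1) (i + d + 1), (g a + g b)
        = ∑ b ∈ Icc (a + 1) (i + d), (g a + g b) + (g a + g (i + d + 1)) := fun a ha =>
      sum_Icc_succ_top (by simp at ha; omega) _
    rw [← add_assoc, sum_Icc_succ_top (show i ≤ i + d + 1 by omega),
      sum_Icc_succ_top (show i ≤ i + d + 1 by omega) g,
      Icc_eq_empty (show ¬i + d + 1 + 1 ≤ i + d + 1 by omega), sum_empty,
      add_zero, sum_congr rfl hsplit, sum_add_distrib, ih, sum_add_distrib, sum_const,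
      Nat.card_Icc, show i + d + 1 - i = d + 1 by omega, smul_add, succ_nsmul, succ_nsmul]
    abel

theorem sum_Icc_sum_Icc_const_add_add_add (θ : ℝ) (g : ℕ → ℝ) (w : ℕ → ℕ → ℝ) (i d : ℕ) :
    ∑ a ∈ Icc i (i + d), ∑ b ∈ Icc (a + 1) (i + d), (θ + g a + g b + w a b)
      = d * (d + 1) / 2 * θ + d * ∑ k ∈ Icc i (i + d), g k
        + ∑ a ∈ Icc i (i + d), ∑ b ∈ Icc (a + 1) (i + d), w a b := by
  calc ∑ a ∈ Icc i (i + d), ∑ b ∈ Icc (a + 1) (i + d), (θ + g a + g b + w a b)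
      = ∑ a ∈ Icc i (i + d), ∑ b ∈ Icc (a + 1) (i + d), ((θ / 2 + g a) + (θ / 2 + g b))
        + ∑ a ∈ Icc i (i + d), ∑ b ∈ Icc (a + 1) (i + d), w a b := by
        rw [← sum_add_distrib]
        refine sum_congr rfl fun a _ => ?_
        rw [← sum_add_distrib]
        exact sum_congr rfl fun b _ => by ring
    _ = d • ∑ k ∈ Icc i (i + d), (θ / 2 + g k)
        + ∑ a ∈ Icc i (i + d), ∑ b ∈ Icc (a + 1) (i + d), w a b := by
        rw [sum_Icc_sum_Icc_add_add (fun k => θ / 2 + g k)]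
    _ = _ := by
        rw [sum_add_distrib, sum_const, Nat.card_Icc, show i + d + 1 - i = d + 1 by omega,
          nsmul_eq_mul, nsmul_eq_mul]
        push_cast
        ring

theorem circular_bootstrap_hoeffding_decomposition_general
    (n l m : ℕ) (hn : 1 ≤ n) (hl : 2 ≤ l)
    (x : ℕ → ℝ) (hcirc : ∀ k, n < k → x k = x (k - n))
    (θ : ℝ) (h₁ : ℝ → ℝ) (h₂ : ℝ → ℝ → ℝ) (h : ℝ → ℝ → ℝ)
    (hdef : ∀ a b : ℝ, h a b = θ + h₁ a + h₁ b + h₂ a b)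
    (xbar : ℕ → ℝ)
    (hxbar : ∀ i, xbar i = 2 / ((l : ℝ) * ((l : ℝ) - 1)) *
      ∑ a ∈ Finset.Icc i (i + l - 1), ∑ b ∈ Finset.Icc (a + 1) (i + l - 1), h (x a) (x b))
    (t : Fin m → ℕ) :
    Real.sqrt ((m : ℝ) * (l : ℝ)) *
        ((1 / (m : ℝ)) * ∑ j : Fin m, xbar (t j)
          - (1 / (n : ℝ)) * ∑ i ∈ Finset.Icc 1 n, xbar i)
      = 2 / Real.sqrt ((m : ℝ) * (l : ℝ)) *
          ∑ j : Fin m, (∑ k ∈ Finset.Icc (t j) (t j + l - 1), h₁ (x k)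
            - (l : ℝ) / (n : ℝ) * ∑ r ∈ Finset.Icc 1 n, h₁ (x r))
        + 2 / (Real.sqrt ((m : ℝ) * (l : ℝ)) * ((l : ℝ) - 1)) *
          ∑ j : Fin m,
            (∑ a ∈ Finset.Icc (t j) (t j + l - 1),
                ∑ b ∈ Finset.Icc (a + 1) (t j + l - 1), h₂ (x a) (x b)
              - (1 / (n : ℝ)) * ∑ r ∈ Finset.Icc 1 n,
                  ∑ a ∈ Finset.Icc r (r + l - 1),
                    ∑ b ∈ Finset.Icc (a + 1) (r + l - 1), h₂ (x a) (x b)) := by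
  rcases Nat.eq_zero_or_pos m with rfl | hm
  · simp
  obtain ⟨d, rfl⟩ : ∃ d, l = d + 1 := ⟨l - 1, by omega⟩
  simp only [Nat.add_sub_cancel, ← add_assoc] at hxbar ⊢
  have hd : (d : ℝ) ≠ 0 := by exact_mod_cast (show d ≠ 0 by omega)
  have hxbar_eq : ∀ i, xbar i = θ + 2 / (d + 1) * ∑ k ∈ Icc i (i + d), h₁ (x k)
      + 2 / ((d + 1) * d) * ∑ a ∈ Icc i (i + d), ∑ b ∈ Icc (a + 1) (i + d), h₂ (x a) (x b) := by
    intro i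
    have hl' : ((d + 1 : ℕ) : ℝ) - 1 = d := by push_cast; ring
    simp only [hxbar, hl', hdef, sum_Icc_sum_Icc_const_add_add_add θ (fun k => h₁ (x k))
      (fun a b => h₂ (x a) (x b))]
    push_cast
    field_simp
  have hperiodic : Function.Periodic (fun k => h₁ (x (k + 1))) n := fun k => by
    simp only [hcirc (k + n + 1) (by omega), show k + n + 1 - n = k + 1 by omega]
  have hcircle : ∑ i ∈ Icc 1 n, ∑ k ∈ Icc i (i + d), h₁ (x k)
      = (d + 1) * ∑ r ∈ Icc 1 n, h₁ (x r) := by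
    rw [hperiodic.sum_Icc_one_sum_Icc_add, nsmul_eq_mul, Nat.cast_add_one]
  simp only [hxbar_eq, sum_add_distrib, sum_sub_distrib, ← mul_sum, sum_const, card_univ,
    Fintype.card_fin, Nat.card_Icc, Nat.add_sub_cancel, nsmul_eq_mul, hcircle]
  have hm' : (m : ℝ) ≠ 0 := by positivity
  have hn' : (n : ℝ) ≠ 0 := by positivity
  have hM2 : Real.sqrt (m * (d + 1 : ℕ)) ^ 2 = m * (d + 1) := by
    rw [Real.sq_sqrt (by positivity)]
    push_cast
    ring
  have hM : Real.sqrt (m * (d + 1 : ℕ)) ≠ 0 := by positivity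
  generalize Real.sqrt (m * (d + 1 : ℕ)) = M at hM hM2 ⊢
  push_cast
  rw [add_sub_cancel_right]
  field_simp
  rw [hM2]
  ring

/-- **Hoeffding decomposition of the circular block bootstrap version of a U-statistic**
(deterministic identity): if `h(x,y) = θ + h₁(x) + h₁(y) + h₂(x,y)`, the sample
`x₁, …, x_n` is extended circularly (`x_k = x_{k-n}` for `k > n`), and
`x̄₁(i) = (2/(l(l-1))) Σ_{i ≤ a < b ≤ i+l-1} h(x_a, x_b)`, then for all
`t₁, …, t_m ∈ {1, …, n}`:
`√(ml)((1/m) Σ_j x̄₁(t_j) - (1/n) Σ_i x̄₁(i))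
  = (2/√(ml)) Σ_j [Σ_{k=t_j}^{t_j+l-1} h₁(x_k) - (l/n) Σ_{r=1}^n h₁(x_r)]
  + (2/(√(ml)(l-1))) Σ_j [Σ_{t_j ≤ a < b ≤ t_j+l-1} h₂(x_a, x_b)
      - (1/n) Σ_{r=1}^n Σ_{r ≤ a < b ≤ r+l-1} h₂(x_a, x_b)]`. -/
theorem circular_bootstrap_hoeffding_decomposition
    (n l m : ℕ) (hn : 1 ≤ n) (hl : 2 ≤ l)
    (x : ℕ → ℝ) (hcirc : ∀ k, n < k → x k = x (k - n))
    (θ : ℝ) (h₁ : ℝ → ℝ) (h₂ : ℝ → ℝ → ℝ) (h : ℝ → ℝ → ℝ)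
    (hdef : ∀ a b : ℝ, h a b = θ + h₁ a + h₁ b + h₂ a b)
    (xbar : ℕ → ℝ)
    (hxbar : ∀ i, xbar i = 2 / ((l : ℝ) * ((l : ℝ) - 1)) *
      ∑ a ∈ Finset.Icc i (i + l - 1), ∑ b ∈ Finset.Icc (a + 1) (i + l - 1), h (x a) (x b))
    (t : Fin m → ℕ) (ht : ∀ j, t j ∈ Finset.Icc 1 n) :
    Real.sqrt ((m : ℝ) * (l : ℝ)) *
        ((1 / (m : ℝ)) * ∑ j : Fin m, xbar (t j)
          - (1 / (n : ℝ)) * ∑ i ∈ Finset.Icc 1 n, xbar i)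
      = 2 / Real.sqrt ((m : ℝ) * (l : ℝ)) *
          ∑ j : Fin m, (∑ k ∈ Finset.Icc (t j) (t j + l - 1), h₁ (x k)
            - (l : ℝ) / (n : ℝ) * ∑ r ∈ Finset.Icc 1 n, h₁ (x r))
        + 2 / (Real.sqrt ((m : ℝ) * (l : ℝ)) * ((l : ℝ) - 1)) *
          ∑ j : Fin m,
            (∑ a ∈ Finset.Icc (t j) (t j + l - 1),
                ∑ b ∈ Finset.Icc (a + 1) (t j + l - 1), h₂ (x a) (x b)
              - (1 / (n : ℝ)) * ∑ r ∈ Finset.Icc 1 n,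
                  ∑ a ∈ Finset.Icc r (r + l - 1),
                    ∑ b ∈ Finset.Icc (a + 1) (r + l - 1), h₂ (x a) (x b)) :=
  circular_bootstrap_hoeffding_decomposition_general n l m hn hl x hcirc θ h₁ h₂ h hdef xbar hxbar t
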